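/- ∏_{n≥0} [((n+1)(2n+2)) / ((n+2)(2n+3))]^{(-1)^{t_n}} = √2/2. -/

import Mathlib

/-!
Write `ε n = (-1) ^ tm n` and take logarithms. Since `ε (2 * m) = ε m` and
`ε (2 * m + 1) = -ε m`, `∑_{n < 2N} ε n * u n = ∑_{m < N} ε m * (u (2m) - u (2m+1))`. Hence
`∑ ε n * u n` converges as soon as `u n → 0` and the pair differences `u (2m) - u (2m+1)` are
summable, which is the case for logarithms of ratios of products of affine functions of `n`
(the pair differences are `O(1 / m²)`).

For `u n = log ((n + 1) / n)` the pair difference at `m ≥ 1` is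
`u m + 2 log ((2m + 1) / (2m + 2))`, and comparing the partial sums up to `2N` and up to `N`
(the boundary term at `m = 0` contributes `log 2`) gives the Woods–Robbins product
`∏ ((2n + 1) / (2n + 2)) ^ ε n = 1 / √2`. Splitting the factor of the theorem as
`(n + 1) / (n + 2) * (2n + 2) / (2n + 3)` and pairing, its partial product up to `2N` is the
Woods–Robbins one up to `N` times `∏_{N ≤ n < 2N} ((2n + 2) / (2n + 3)) ^ ε n`, which tends to `1`.
-/

open Filter Finset Topology

/-- The Thue–Morse sequence: sum modulo 2 of the binary digits of `n`. -/
def tm (n : ℕ) : ℕ := (Nat.digits 2 n).sum % 2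

open Real

def tmSign (n : ℕ) : ℝ := (-1) ^ tm n

lemma tmSign_eq_neg_one_pow_digits_sum (n : ℕ) : tmSign n = (-1) ^ (Nat.digits 2 n).sum := by
  rw [tmSign, tm, ← Nat.mod_add_div (Nat.digits 2 n).sum 2, pow_add, pow_mul]
  simp

lemma tmSign_two_mul (n : ℕ) : tmSign (2 * n) = tmSign n := by
  rcases Nat.eq_zero_or_pos n with rfl | hn
  · rfl
  · rw [tmSign_eq_neg_one_pow_digits_sum, tmSign_eq_neg_one_pow_digits_sum,
      Nat.digits_def' one_lt_two (by omega)]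
    simp [Nat.mul_div_cancel_left n two_pos]

lemma tmSign_two_mul_add_one (n : ℕ) : tmSign (2 * n + 1) = -tmSign n := by
  rw [tmSign_eq_neg_one_pow_digits_sum, tmSign_eq_neg_one_pow_digits_sum,
    Nat.digits_def' one_lt_two (by omega)]
  simp [Nat.mul_add_div two_pos, pow_add]

lemma abs_tmSign (n : ℕ) : |tmSign n| = 1 := by simp [tmSign]

def tmSum (u : ℕ → ℝ) (N : ℕ) : ℝ := ∑ n ∈ range N, tmSign n * u n

def pairDiff (u : ℕ → ℝ) (m : ℕ) : ℝ := u (2 * m) - u (2 * m + 1)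

lemma tmSum_add (u v : ℕ → ℝ) (N : ℕ) : tmSum (u + v) N = tmSum u N + tmSum v N := by
  simp only [tmSum, Pi.add_apply, mul_add, sum_add_distrib]

lemma tmSum_sub (u v : ℕ → ℝ) (N : ℕ) : tmSum (u - v) N = tmSum u N - tmSum v N := by
  simp only [tmSum, Pi.sub_apply, mul_sub, sum_sub_distrib]

lemma tmSum_two_mul (u : ℕ → ℝ) (N : ℕ) : tmSum u (2 * N) = tmSum (pairDiff u) N := by
  induction N with
  | zero => simp [tmSum]
  | succ N ih =>
    simp only [tmSum] at ih ⊢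
    rw [show 2 * (N + 1) = 2 * N + 1 + 1 by ring, sum_range_succ, sum_range_succ, ih,
      sum_range_succ, tmSign_two_mul, tmSign_two_mul_add_one, pairDiff]
    ring

lemma tendsto_of_tendsto_two_mul_of_tendsto_two_mul_add_one {α : Type*} {f : ℕ → α}
    {l : Filter α} (h₀ : Tendsto (fun n => f (2 * n)) atTop l)
    (h₁ : Tendsto (fun n => f (2 * n + 1)) atTop l) : Tendsto f atTop l := by
  intro s hs
  obtain ⟨a, ha⟩ := mem_atTop_sets.1 (h₀ hs)
  obtain ⟨b, hb⟩ := mem_atTop_sets.1 (h₁ hs)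
  refine mem_atTop_sets.2 ⟨2 * (a + b), fun n hn => ?_⟩
  obtain ⟨k, rfl | rfl⟩ := Nat.even_or_odd' n
  · exact ha k (by omega)
  · exact hb k (by omega)

lemma tendsto_tmSum_of_summable {v : ℕ → ℝ} (hv : Summable v) :
    Tendsto (tmSum v) atTop (𝓝 (∑' n, tmSign n * v n)) := by
  have : Summable fun n => tmSign n * v n :=
    .of_norm (by simpa [abs_mul, abs_tmSign] using hv.norm)
  exact this.hasSum.tendsto_sum_nat

lemma tendsto_tmSum_of_tendsto_two_mul {u : ℕ → ℝ} {L : ℝ} (hu : Tendsto u atTop (𝓝 0))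
    (h : Tendsto (fun N => tmSum u (2 * N)) atTop (𝓝 L)) : Tendsto (tmSum u) atTop (𝓝 L) := by
  refine tendsto_of_tendsto_two_mul_of_tendsto_two_mul_add_one h ?_
  have hu₂ : Tendsto (fun N => u (2 * N)) atTop (𝓝 0) :=
    hu.comp (tendsto_id.const_mul_atTop' two_pos)
  have hlast : Tendsto (fun N => tmSign (2 * N) * u (2 * N)) atTop (𝓝 0) :=
    squeeze_zero_norm (fun N => by simp [abs_tmSign])
      (tendsto_zero_iff_norm_tendsto_zero.1 hu₂)
  simpa [tmSum, sum_range_succ] using h.add hlast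

lemma tendsto_tmSum_two_mul_sub {u : ℕ → ℝ} (hu : Tendsto u atTop (𝓝 0))
    (hd : Summable (pairDiff u)) :
    Tendsto (fun N => tmSum u (2 * N) - tmSum u N) atTop (𝓝 0) := by
  have h := tendsto_tmSum_of_tendsto_two_mul hu
    (by simpa only [tmSum_two_mul] using tendsto_tmSum_of_summable hd)
  simpa using (h.comp (tendsto_id.const_mul_atTop' two_pos)).sub h

lemma tendsto_log_mul_add_sub_log_mul_add {α : ℝ} (hα : 0 < α) (a b : ℝ) :
    Tendsto (fun n : ℕ => log (α * n + a) - log (α * n + b)) atTop (𝓝 0) := by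
  have hx : Tendsto (fun n : ℕ => α * n + b) atTop atTop :=
    tendsto_atTop_add_const_right _ _ (tendsto_natCast_atTop_atTop.const_mul_atTop hα)
  refine ((tendsto_log_comp_add_sub_log (a - b)).comp hx).congr fun n => ?_
  simp only [Function.comp_apply, add_add_sub_cancel]

lemma summable_log_mul_add {α a b c d : ℝ} (hα : 0 < α) (ha : 0 ≤ a) (hb : 0 ≤ b) (hc : 0 ≤ c)
    (hd : 0 ≤ d) (h : a + b = c + d) :
    Summable fun n : ℕ =>
      log (α * n + a) + log (α * n + b) - log (α * n + c) - log (α * n + d) := by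
  set k := a * b - c * d
  have hbound : Summable fun n : ℕ => |k| / α ^ 2 * (1 / (n : ℝ) ^ 2) :=
    (summable_one_div_nat_pow.2 one_lt_two).mul_left _
  have hsmall : Summable fun n : ℕ => k / ((α * n + c) * (α * n + d)) := by
    refine hbound.of_norm_bounded_eventually_nat ?_
    filter_upwards [eventually_ge_atTop 1] with n hn
    have hn' : (0 : ℝ) < n := by exact_mod_cast hn
    have hZW : (α * n) ^ 2 ≤ (α * n + c) * (α * n + d) := by nlinarith [mul_pos hα hn']
    have hZW' : 0 < (α * n + c) * (α * n + d) := by positivity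
    rw [norm_div, Real.norm_eq_abs, Real.norm_eq_abs, abs_of_pos hZW']
    calc |k| / ((α * n + c) * (α * n + d)) ≤ |k| / (α * n) ^ 2 :=
          div_le_div_of_nonneg_left (abs_nonneg k) (by positivity) hZW
      _ = |k| / α ^ 2 * (1 / (n : ℝ) ^ 2) := by ring
  refine (Real.summable_log_one_add_of_summable hsmall).congr_cofinite ?_
  rw [Nat.cofinite_eq_atTop]
  filter_upwards [eventually_ge_atTop 1] with n hn
  have hn' : (1 : ℝ) ≤ n := by exact_mod_cast hn
  have hX : 0 < α * n + a := by positivity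
  have hY : 0 < α * n + b := by positivity
  have hZ : 0 < α * n + c := by positivity
  have hW : 0 < α * n + d := by positivity
  rw [show 1 + k / ((α * n + c) * (α * n + d))
      = (α * n + a) * (α * n + b) / ((α * n + c) * (α * n + d)) by
    field_simp; linear_combination -(α * n) * h]
  rw [log_div (by positivity) (by positivity), log_mul hX.ne' hY.ne', log_mul hZ.ne' hW.ne']
  ring

lemma pairDiff_log_succ_sub_log {m : ℕ} (hm : m ≠ 0) :
    pairDiff (fun n : ℕ => log (n + 1) - log n) m =
      log (m + 1) - log m + 2 * (log (2 * m + 1) - log (2 * m + 2)) := by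
  have hm' : (m : ℝ) ≠ 0 := Nat.cast_ne_zero.2 hm
  simp only [pairDiff]
  push_cast
  rw [show (2 * m + 1 + 1 : ℝ) = 2 * (m + 1) by ring, show (2 * m + 2 : ℝ) = 2 * (m + 1) by ring,
    log_mul two_ne_zero hm', log_mul two_ne_zero (by positivity)]
  ring

lemma summable_pairDiff_log_succ_sub_log :
    Summable (pairDiff fun n : ℕ => log (n + 1) - log n) := by
  refine (summable_log_mul_add (α := 2) (a := 1) (b := 1) (c := 0) (d := 2) two_pos zero_le_one
    zero_le_one le_rfl zero_le_two (by norm_num)).congr fun m => ?_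
  simp only [pairDiff]
  push_cast
  ring_nf

lemma two_mul_tmSum_log_odd_sub_log_even {N : ℕ} (hN : N ≠ 0) :
    2 * tmSum (fun n : ℕ => log (2 * n + 1) - log (2 * n + 2)) N =
      tmSum (fun n : ℕ => log (n + 1) - log n) (2 * N)
        - tmSum (fun n : ℕ => log (n + 1) - log n) N - log 2 := by
  have hdefect : ∑ m ∈ range N, tmSign m * (pairDiff (fun n : ℕ => log (n + 1) - log n) m
      - (log (m + 1) - log m) - 2 * (log (2 * m + 1) - log (2 * m + 2))) = log 2 := by
    rw [sum_eq_single_of_mem 0 (mem_range.2 (Nat.pos_of_ne_zero hN)) fun m _ hm => by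
      rw [pairDiff_log_succ_sub_log hm]; ring]
    norm_num [tmSign, tm, pairDiff]
    ring
  rw [tmSum_two_mul, ← hdefect]
  simp only [tmSum, mul_sum, ← sum_sub_distrib]
  exact sum_congr rfl fun m _ => by ring

-- The Woods–Robbins product `∏ ((2n + 1) / (2n + 2)) ^ ε n = 1 / √2`, in logarithmic form.
lemma tendsto_tmSum_log_odd_sub_log_even :
    Tendsto (tmSum fun n : ℕ => log (2 * n + 1) - log (2 * n + 2)) atTop (𝓝 (-(log 2 / 2))) := by
  have hD := tendsto_tmSum_two_mul_sub tendsto_log_nat_add_one_sub_log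
    summable_pairDiff_log_succ_sub_log
  refine (((hD.sub_const (log 2)).div_const 2).congr' ?_).trans (by rw [zero_sub, neg_div])
  filter_upwards [eventually_ne_atTop 0] with N hN
  linarith [two_mul_tmSum_log_odd_sub_log_even hN]

lemma pairDiff_log_factor :
    pairDiff (fun n : ℕ => log (n + 1) + log (2 * n + 2) - log (n + 2) - log (2 * n + 3)) =
      (fun n : ℕ => log (2 * n + 1) - log (2 * n + 2))
        + pairDiff (fun n : ℕ => log (2 * n + 2) - log (2 * n + 3))
        - (fun n : ℕ => log (2 * n + 2) - log (2 * n + 3)) := by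
  funext m
  simp only [pairDiff, Pi.add_apply, Pi.sub_apply]
  push_cast
  ring_nf

lemma summable_pairDiff_log_even_sub_log_odd :
    Summable (pairDiff fun n : ℕ => log (2 * n + 2) - log (2 * n + 3)) := by
  refine (summable_log_mul_add (α := 4) (a := 2) (b := 5) (c := 3) (d := 4) four_pos zero_le_two
    (by norm_num) (by norm_num) zero_le_four (by norm_num)).congr fun m => ?_
  simp only [pairDiff]
  push_cast
  ring_nf

lemma tendsto_tmSum_log_factor :
    Tendsto (tmSum fun n : ℕ => log (n + 1) + log (2 * n + 2) - log (n + 2) - log (2 * n + 3))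
      atTop (𝓝 (-(log 2 / 2))) := by
  have hc := tendsto_tmSum_two_mul_sub (tendsto_log_mul_add_sub_log_mul_add two_pos 2 3)
    summable_pairDiff_log_even_sub_log_odd
  have hzero : Tendsto (fun n : ℕ => log (n + 1) + log (2 * n + 2) - log (n + 2) - log (2 * n + 3))
      atTop (𝓝 0) := by
    have h := (tendsto_log_mul_add_sub_log_mul_add one_pos 1 2).add
      (tendsto_log_mul_add_sub_log_mul_add two_pos 2 3)
    rw [add_zero] at h
    exact h.congr fun n => by simp only [one_mul]; ring
  refine tendsto_tmSum_of_tendsto_two_mul hzero ?_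
  have h := tendsto_tmSum_log_odd_sub_log_even.add hc
  rw [add_zero] at h
  refine h.congr fun N => ?_
  simp only [tmSum_two_mul, pairDiff_log_factor, tmSum_add, tmSum_sub]
  ring

lemma sqrt_two_div_two_eq_exp : √2 / 2 = exp (-(log 2 / 2)) := by
  rw [sqrt_div_self', sqrt_eq_rpow, rpow_def_of_pos two_pos, one_div (exp _), ← exp_neg]
  ring_nf

lemma prod_zpow_eq_exp_tmSum {f : ℕ → ℝ} (hf : ∀ n, 0 < f n) (N : ℕ) :
    ∏ n ∈ range N, f n ^ ((-1 : ℤ) ^ tm n) = exp (tmSum (fun n => log (f n)) N) := by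
  rw [tmSum, exp_sum]
  refine prod_congr rfl fun n _ => ?_
  rw [← exp_log (zpow_pos (hf n) _), log_zpow, tmSign]
  push_cast
  rfl

theorem prod_g :
    Tendsto (fun N => ∏ n ∈ Finset.range N,
        (((((n : ℝ) + 1) * (2 * (n : ℝ) + 2)) / (((n : ℝ) + 2) * (2 * (n : ℝ) + 3)))) ^ ((-1 : ℤ) ^ tm n))
      atTop (𝓝 (Real.sqrt 2 / 2)) := by
  have hlog (n : ℕ) : log (((n : ℝ) + 1) * (2 * n + 2) / ((n + 2) * (2 * n + 3))) =
      log (n + 1) + log (2 * n + 2) - log (n + 2) - log (2 * n + 3) := by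
    rw [log_div (by positivity) (by positivity), log_mul (by positivity) (by positivity),
      log_mul (by positivity) (by positivity)]
    ring
  have hpos (n : ℕ) : 0 < ((n : ℝ) + 1) * (2 * n + 2) / ((n + 2) * (2 * n + 3)) := by positivity
  rw [sqrt_two_div_two_eq_exp]
  refine ((continuous_exp.tendsto _).comp tendsto_tmSum_log_factor).congr fun N => ?_
  rw [Function.comp_apply, prod_zpow_eq_exp_tmSum hpos, funext hlog]
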